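/- Under the general setup, suppose condition (I⁰_ρ)* holds for some ρ > 0 and some i ∈ {1,2}. Then for every (u,v) in the boundary of V_ρ relative to K and every real μ ≥ 0, one has (u,v) ≠ T(u,v) + μ·(e,e), where e denotes the constant function 1 on [0,1]. (This is the key property from which the paper deduces that the fixed point index of T on V_ρ equals 0.) -/

import Mathlib

open MeasureTheory Set Filter

noncomputable section

/-- The sup norm `‖w‖∞ = sup {|w(t)| : t ∈ [0,1]}`. -/
def supN (w : ℝ → ℝ) : ℝ := sSup ((fun t => |w t|) '' Icc (0:ℝ) 1)

/-- The minimum `min {w(t) : t ∈ [a,b]}`. -/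
def minOnIcc (w : ℝ → ℝ) (a b : ℝ) : ℝ := sInf (w '' Icc a b)

/-- The general setup of Infante–Pietramala, "Multiple positive solutions of systems with
coupled nonlinear BCs".  Indices `i, j ∈ {1,2}` of the paper correspond to `0, 1 : Fin 2`. -/
structure Setup where
  f : Fin 2 → ℝ → ℝ → ℝ → ℝ
  k : Fin 2 → ℝ → ℝ → ℝ
  g : Fin 2 → ℝ → ℝ
  a : Fin 2 → ℝ
  b : Fin 2 → ℝ
  Φ : Fin 2 → ℝ → ℝ
  c : Fin 2 → ℝ
  B : Fin 2 → Fin 2 → Measure ℝ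
  C : Fin 2 → Fin 2 → Measure ℝ
  H : Fin 2 → Fin 2 → ℝ → ℝ
  L : Fin 2 → Fin 2 → ℝ → ℝ
  h1 : Fin 2 → Fin 2 → ℝ
  h2 : Fin 2 → Fin 2 → ℝ
  l2 : Fin 2 → Fin 2 → ℝ
  γ : Fin 2 → Fin 2 → ℝ → ℝ
  cγ : Fin 2 → Fin 2 → ℝ
  -- the nonlinearities fᵢ : [0,1] × [0,∞)² → [0,∞) satisfy Carathéodory conditions
  f_nonneg : ∀ i, ∀ t ∈ Icc (0:ℝ) 1, ∀ u, 0 ≤ u → ∀ v, 0 ≤ v → 0 ≤ f i t u v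
  f_meas : ∀ i u v, Measurable fun t => f i t u v
  f_cont : ∀ i, ∀ᵐ t ∂(volume.restrict (Icc (0:ℝ) 1)),
      ContinuousOn (fun p : ℝ × ℝ => f i t p.1 p.2) (Ici 0 ×ˢ Ici 0)
  f_bdd : ∀ i, ∀ r > (0:ℝ), ∃ φ : ℝ → ℝ, MemLp φ ⊤ (volume.restrict (Icc (0:ℝ) 1)) ∧
      ∀ᵐ t ∂(volume.restrict (Icc (0:ℝ) 1)), ∀ u ∈ Icc (0:ℝ) r, ∀ v ∈ Icc (0:ℝ) r,
        f i t u v ≤ φ t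
  -- the kernels
  k_nonneg : ∀ i, ∀ t ∈ Icc (0:ℝ) 1, ∀ s ∈ Icc (0:ℝ) 1, 0 ≤ k i t s
  k_meas : ∀ i, Measurable (Function.uncurry (k i))
  k_cont : ∀ i, ∀ τ ∈ Icc (0:ℝ) 1, ∀ᵐ s ∂(volume.restrict (Icc (0:ℝ) 1)),
      Tendsto (fun t => |k i t s - k i τ s|) (nhds τ) (nhds 0)
  -- the subintervals [aᵢ,bᵢ] ⊆ [0,1], the functions Φᵢ and the constants cᵢ ∈ (0,1]
  ab_mem : ∀ i, 0 ≤ a i ∧ a i ≤ b i ∧ b i ≤ 1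
  Φ_mem : ∀ i, MemLp (Φ i) ⊤ (volume.restrict (Icc (0:ℝ) 1))
  c_mem : ∀ i, c i ∈ Ioc (0:ℝ) 1
  k_le : ∀ i, ∀ t ∈ Icc (0:ℝ) 1, ∀ᵐ s ∂(volume.restrict (Icc (0:ℝ) 1)), k i t s ≤ Φ i s
  k_ge : ∀ i, ∀ t ∈ Icc (a i) (b i), ∀ᵐ s ∂(volume.restrict (Icc (0:ℝ) 1)),
      c i * Φ i s ≤ k i t s
  -- the weights gᵢ
  g_meas : ∀ i, Measurable (g i)
  g_nonneg : ∀ i, ∀ᵐ s ∂(volume.restrict (Icc (0:ℝ) 1)), 0 ≤ g i s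
  gΦ_int : ∀ i, IntegrableOn (fun s => g i s * Φ i s) (Icc (0:ℝ) 1)
  gΦ_pos : ∀ i, 0 < ∫ s in Icc (a i) (b i), Φ i s * g i s
  -- the Stieltjes measures defining the functionals β and δ
  B_fin : ∀ i j, IsFiniteMeasure (B i j)
  C_fin : ∀ i j, IsFiniteMeasure (C i j)
  B_supp : ∀ i j, B i j (Icc (0:ℝ) 1)ᶜ = 0
  C_supp : ∀ i j, C i j (Icc (0:ℝ) 1)ᶜ = 0
  -- the nonlinear boundary functions H, L with their linear bounds
  H_cont : ∀ i j, ContinuousOn (H i j) (Ici 0)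
  L_cont : ∀ i j, ContinuousOn (L i j) (Ici 0)
  H_nonneg : ∀ i j w, 0 ≤ w → 0 ≤ H i j w
  L_nonneg : ∀ i j w, 0 ≤ w → 0 ≤ L i j w
  h1_nonneg : ∀ i j, 0 ≤ h1 i j
  h2_nonneg : ∀ i j, 0 ≤ h2 i j
  l2_nonneg : ∀ i j, 0 ≤ l2 i j
  H_bound_lower : ∀ i j w, 0 ≤ w → h1 i j * w ≤ H i j w
  H_bound_upper : ∀ i j w, 0 ≤ w → H i j w ≤ h2 i j * w
  L_bound : ∀ i j w, 0 ≤ w → L i j w ≤ l2 i j * w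
  -- the functions γᵢⱼ
  γ_cont : ∀ i j, ContinuousOn (γ i j) (Icc (0:ℝ) 1)
  γ_nonneg : ∀ i j, ∀ t ∈ Icc (0:ℝ) 1, 0 ≤ γ i j t
  hβγ : ∀ i j, h2 i j * ∫ s, γ i j s ∂(B i j) < 1
  cγ_mem : ∀ i j, cγ i j ∈ Ioc (0:ℝ) 1
  γ_ge : ∀ i j, ∀ t ∈ Icc (a i) (b i), cγ i j * supN (γ i j) ≤ γ i j t
  -- positivity of the determinants Dᵢ
  D_pos : ∀ i,
      0 < (1 - h2 i 0 * ∫ s, γ i 0 s ∂(B i 0)) * (1 - h2 i 1 * ∫ s, γ i 1 s ∂(B i 1))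
        - h2 i 0 * h2 i 1 * (∫ s, γ i 1 s ∂(B i 0)) * (∫ s, γ i 0 s ∂(B i 1))

namespace Setup

variable (S : Setup)

/-- The functionals `β_{ij}[w] = ∫₀¹ w dB_{ij}`. -/
def β (i j : Fin 2) (w : ℝ → ℝ) : ℝ := ∫ s, w s ∂(S.B i j)

/-- The functionals `δ_{ij}[w] = ∫₀¹ w dC_{ij}`. -/
def δ (i j : Fin 2) (w : ℝ → ℝ) : ℝ := ∫ s, w s ∂(S.C i j)

/-- The Hammerstein integral operators `Fᵢ`. -/
def F (i : Fin 2) (u v : ℝ → ℝ) (t : ℝ) : ℝ :=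
  ∫ s in Icc (0:ℝ) 1, S.k i t s * S.g i s * S.f i s (u s) (v s)

/-- First component of the operator `T`. -/
def T1 (u v : ℝ → ℝ) (t : ℝ) : ℝ :=
  S.γ 0 0 t * (S.H 0 0 (S.β 0 0 u) + S.L 0 0 (S.δ 0 0 v))
    + S.γ 0 1 t * (S.H 0 1 (S.β 0 1 u) + S.L 0 1 (S.δ 0 1 v))
    + S.F 0 u v t

/-- Second component of the operator `T`. -/
def T2 (u v : ℝ → ℝ) (t : ℝ) : ℝ :=
  S.γ 1 0 t * (S.L 1 0 (S.δ 1 0 u) + S.H 1 0 (S.β 1 0 v))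
    + S.γ 1 1 t * (S.L 1 1 (S.δ 1 1 u) + S.H 1 1 (S.β 1 1 v))
    + S.F 1 u v t

/-- The constants `c̃ᵢ = min{cᵢ, c_{i1}, c_{i2}}`. -/
def ctilde (i : Fin 2) : ℝ := min (S.c i) (min (S.cγ i 0) (S.cγ i 1))

/-- The constant `c = min{c̃₁, c̃₂}`. -/
def cc : ℝ := min (S.ctilde 0) (S.ctilde 1)

/-- Membership of `(u,v)` in the cone `K = K̃₁ × K̃₂`. -/
def inK (u v : ℝ → ℝ) : Prop :=
  ContinuousOn u (Icc (0:ℝ) 1) ∧ ContinuousOn v (Icc (0:ℝ) 1) ∧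
  (∀ t ∈ Icc (0:ℝ) 1, 0 ≤ u t) ∧ (∀ t ∈ Icc (0:ℝ) 1, 0 ≤ v t) ∧
  S.ctilde 0 * supN u ≤ minOnIcc u (S.a 0) (S.b 0) ∧
  S.ctilde 1 * supN v ≤ minOnIcc v (S.a 1) (S.b 1)

/-- `𝒦_{ij}(s) = ∫₀¹ kᵢ(t,s) dB_{ij}(t)`. -/
def KK (i j : Fin 2) (s : ℝ) : ℝ := ∫ t, S.k i t s ∂(S.B i j)

/-- `Qᵢ = Σ_l β_{i1}[γ_{il}] l_{il2} δ_{il}[1]`. -/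
def Q (i : Fin 2) : ℝ := ∑ l, S.β i 0 (S.γ i l) * S.l2 i l * S.δ i l (fun _ => 1)

/-- `Sᵢ = Σ_l β_{i2}[γ_{il}] l_{il2} δ_{il}[1]`. -/
def Sq (i : Fin 2) : ℝ := ∑ l, S.β i 1 (S.γ i l) * S.l2 i l * S.δ i l (fun _ => 1)

/-- The determinant `Dᵢ`. -/
def D (i : Fin 2) : ℝ :=
  (1 - S.h2 i 0 * S.β i 0 (S.γ i 0)) * (1 - S.h2 i 1 * S.β i 1 (S.γ i 1))
    - S.h2 i 0 * S.h2 i 1 * S.β i 0 (S.γ i 1) * S.β i 1 (S.γ i 0)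

/-- The determinant `𝐷̲ᵢ` (with the lower constants `h_{ij1}`). -/
def Dl (i : Fin 2) : ℝ :=
  (1 - S.h1 i 0 * S.β i 0 (S.γ i 0)) * (1 - S.h1 i 1 * S.β i 1 (S.γ i 1))
    - S.h1 i 0 * S.h1 i 1 * S.β i 0 (S.γ i 1) * S.β i 1 (S.γ i 0)

def θ1 (i : Fin 2) : ℝ := (1 - S.h2 i 1 * S.β i 1 (S.γ i 1)) / S.D i
def θ2 (i : Fin 2) : ℝ := S.h2 i 1 * S.β i 0 (S.γ i 1) / S.D i
def θ3 (i : Fin 2) : ℝ := S.h2 i 0 * S.β i 1 (S.γ i 0) / S.D i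
def θ4 (i : Fin 2) : ℝ := (1 - S.h2 i 0 * S.β i 0 (S.γ i 0)) / S.D i

/-- `1/mᵢ = sup_{t ∈ [0,1]} ∫₀¹ kᵢ(t,s)gᵢ(s) ds`. -/
def mInv (i : Fin 2) : ℝ :=
  sSup ((fun t => ∫ s in Icc (0:ℝ) 1, S.k i t s * S.g i s) '' Icc (0:ℝ) 1)

/-- `1/Mᵢ = inf_{t ∈ [aᵢ,bᵢ]} ∫_{aᵢ}^{bᵢ} kᵢ(t,s)gᵢ(s) ds`. -/
def MInv (i : Fin 2) : ℝ :=
  sInf ((fun t => ∫ s in Icc (S.a i) (S.b i), S.k i t s * S.g i s) '' Icc (S.a i) (S.b i))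

/-- `fᵢ^{0,ρ} = sup{fᵢ(t,u,v)/ρ : t ∈ [0,1], u,v ∈ [0,ρ]}`. -/
def fSup (i : Fin 2) (ρ : ℝ) : ℝ :=
  sSup {x | ∃ t ∈ Icc (0:ℝ) 1, ∃ u ∈ Icc (0:ℝ) ρ, ∃ v ∈ Icc (0:ℝ) ρ, x = S.f i t u v / ρ}

/-- `f_{1,(ρ,ρ/c)}`. -/
def fInf1 (ρ : ℝ) : ℝ :=
  sInf {x | ∃ t ∈ Icc (S.a 0) (S.b 0), ∃ u ∈ Icc ρ (ρ / S.cc), ∃ v ∈ Icc (0:ℝ) (ρ / S.cc),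
    x = S.f 0 t u v / ρ}

/-- `f_{2,(ρ,ρ/c)}`. -/
def fInf2 (ρ : ℝ) : ℝ :=
  sInf {x | ∃ t ∈ Icc (S.a 1) (S.b 1), ∃ u ∈ Icc (0:ℝ) (ρ / S.cc), ∃ v ∈ Icc ρ (ρ / S.cc),
    x = S.f 1 t u v / ρ}

def fInf (i : Fin 2) (ρ : ℝ) : ℝ := if i = 0 then S.fInf1 ρ else S.fInf2 ρ

/-- `f*_{i,(0,ρ/c)}`. -/
def fInfStar (i : Fin 2) (ρ : ℝ) : ℝ :=
  sInf {x | ∃ t ∈ Icc (S.a i) (S.b i), ∃ u ∈ Icc (0:ℝ) (ρ / S.cc),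
    ∃ v ∈ Icc (0:ℝ) (ρ / S.cc), x = S.f i t u v / ρ}

/-- Condition `(I¹_ρ)`. -/
def CondI1 (ρ : ℝ) : Prop := ∀ i : Fin 2,
  S.fSup i ρ *
      ((supN (S.γ i 0) * S.h2 i 0 * S.θ1 i + supN (S.γ i 1) * S.h2 i 1 * S.θ3 i)
          * (∫ s in Icc (0:ℝ) 1, S.KK i 0 s * S.g i s)
        + (supN (S.γ i 0) * S.h2 i 0 * S.θ2 i + supN (S.γ i 1) * S.h2 i 1 * S.θ4 i)
          * (∫ s in Icc (0:ℝ) 1, S.KK i 1 s * S.g i s)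
        + S.mInv i)
    + supN (S.γ i 0) * S.h2 i 0 * (S.θ1 i * S.Q i + S.θ2 i * S.Sq i)
    + supN (S.γ i 1) * S.h2 i 1 * (S.θ3 i * S.Q i + S.θ4 i * S.Sq i)
    + (∑ j, supN (S.γ i j) * S.l2 i j * S.δ i j fun _ => 1) < 1

/-- The bracket appearing in conditions `(I⁰_ρ)` and `(I⁰_ρ)*`. -/
def Ψ (i : Fin 2) : ℝ :=
  (S.cγ i 0 * supN (S.γ i 0) * S.h1 i 0 / S.Dl i * (1 - S.h1 i 1 * S.β i 1 (S.γ i 1))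
      + S.cγ i 1 * supN (S.γ i 1) * S.h1 i 1 / S.Dl i * (S.h1 i 0 * S.β i 1 (S.γ i 0)))
    * (∫ s in Icc (S.a i) (S.b i), S.KK i 0 s * S.g i s)
  + (S.cγ i 0 * supN (S.γ i 0) * S.h1 i 0 / S.Dl i * (S.h1 i 1 * S.β i 0 (S.γ i 1))
      + S.cγ i 1 * supN (S.γ i 1) * S.h1 i 1 / S.Dl i * (1 - S.h1 i 0 * S.β i 0 (S.γ i 0)))
    * (∫ s in Icc (S.a i) (S.b i), S.KK i 1 s * S.g i s)
  + S.MInv i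

/-- Condition `(I⁰_ρ)`. -/
def CondI0 (ρ : ℝ) : Prop := ∀ i : Fin 2, 1 < S.fInf i ρ * S.Ψ i

/-- Condition `(I⁰_ρ)*`. -/
def CondI0Star (ρ : ℝ) : Prop := ∃ i : Fin 2, 1 < S.fInfStar i ρ * S.Ψ i

/-- `(u,v)` is a fixed point of `T` (as functions on `[0,1]`). -/
def IsFixedPt (u v : ℝ → ℝ) : Prop :=
  ∀ t ∈ Icc (0:ℝ) 1, S.T1 u v t = u t ∧ S.T2 u v t = v t

/-- `(u,v)` is a positive solution: a fixed point of `T` in `K` with `‖(u,v)‖ > 0`. -/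
def PosSol (u v : ℝ → ℝ) : Prop :=
  S.inK u v ∧ S.IsFixedPt u v ∧ 0 < max (supN u) (supN v)

/-- Two pairs are distinct as elements of `C[0,1] × C[0,1]`. -/
def Distinct (u₁ v₁ u₂ v₂ : ℝ → ℝ) : Prop :=
  ∃ t ∈ Icc (0:ℝ) 1, u₁ t ≠ u₂ t ∨ v₁ t ≠ v₂ t

end Setup

/-!
Suppose `(u,v) = T(u,v) + μ(e,e)` with `min u ≤ ρ` on `[a₁,b₁]` and `min v ≤ ρ` on `[a₂,b₂]`.
The cone inequality gives `0 ≤ u, v ≤ ρ/c`, so `fᵢ(s,u(s),v(s)) ≥ ρ f*_{i,(0,ρ/c)}` on `[aᵢ,bᵢ]`.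
Let `w` be the `i`-th component. Discarding the nonnegative terms (`μ`, the `L`-terms and
`H_{il} - h_{il1}·id`) gives `w ≥ Σ_l γ_{il} h_{il1} β_{il}[w] + ρ f* ∫_{aᵢ}^{bᵢ} kᵢ(·,s) gᵢ(s) ds`.
Applying `β_{i1}, β_{i2}` (and Fubini) yields a 2 × 2 system of linear inequalities for
`(β_{i1}[w], β_{i2}[w])` with determinant `𝐷̲ᵢ > 0`; Cramer's rule bounds both from below, and
substituting back on `[aᵢ,bᵢ]`, where `γ_{il} ≥ c_{il} ‖γ_{il}‖∞`, gives `min w ≥ ρ f* Ψᵢ > ρ`.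
-/

lemma abs_le_supN {w : ℝ → ℝ} (hw : ContinuousOn w (Icc (0:ℝ) 1)) {t : ℝ}
    (ht : t ∈ Icc (0:ℝ) 1) : |w t| ≤ supN w :=
  le_csSup (isCompact_Icc.image_of_continuousOn hw.abs).bddAbove ⟨t, ht, rfl⟩

lemma supN_nonneg (w : ℝ → ℝ) : 0 ≤ supN w :=
  Real.sSup_nonneg fun _ ⟨_, _, hx⟩ => hx ▸ abs_nonneg _

lemma le_div_of_mul_supN_le {w : ℝ → ℝ} (hw : ContinuousOn w (Icc (0:ℝ) 1)) {c c' ρ : ℝ}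
    (hc : 0 < c) (hcc' : c ≤ c') (h : c' * supN w ≤ ρ) {t : ℝ} (ht : t ∈ Icc (0:ℝ) 1) :
    w t ≤ ρ / c := by
  rw [le_div_iff₀ hc]
  calc w t * c ≤ supN w * c :=
        mul_le_mul_of_nonneg_right ((le_abs_self _).trans (abs_le_supN hw ht)) hc.le
    _ ≤ c' * supN w := by rw [mul_comm]; exact mul_le_mul_of_nonneg_right hcc' (supN_nonneg w)
    _ ≤ ρ := h

lemma MeasureTheory.MemLp.exists_ae_le_of_top {α : Type*} [MeasurableSpace α] {μ : Measure α}
    {φ : α → ℝ} (hφ : MemLp φ ⊤ μ) : ∃ C, ∀ᵐ x ∂μ, φ x ≤ C := by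
  have hφ' : eLpNormEssSup φ μ < ⊤ := by simpa only [eLpNorm_exponent_top] using hφ.2
  obtain ⟨C, hC⟩ := eLpNormEssSup_lt_top_iff_isBoundedUnder.1 hφ'
  refine ⟨C, (eventually_map.1 hC).mono fun x hx => (le_abs_self _).trans ?_⟩
  rw [← Real.norm_eq_abs, ← coe_nnnorm]
  exact NNReal.coe_le_coe.2 hx

lemma aemeasurable_of_caratheodory {α : Type*} [MeasurableSpace α] {μ : Measure α}
    {f : α → ℝ → ℝ → ℝ} (hmeas : ∀ x y, Measurable fun t => f t x y)
    (hcont : ∀ᵐ t ∂μ, ContinuousOn (fun p : ℝ × ℝ => f t p.1 p.2) (Ici 0 ×ˢ Ici 0))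
    {u v : α → ℝ} (hu : AEMeasurable u μ) (hv : AEMeasurable v μ)
    (hu0 : ∀ᵐ t ∂μ, 0 ≤ u t) (hv0 : ∀ᵐ t ∂μ, 0 ≤ v t) :
    AEMeasurable (fun t => f t (u t) (v t)) μ := by
  classical
  set N := toMeasurable μ {t | ¬ ContinuousOn (fun p : ℝ × ℝ => f t p.1 p.2) (Ici 0 ×ˢ Ici 0)}
  -- off the null set `N`, and with its arguments clamped to the quadrant, `f` is jointly measurable
  let f' : ℝ × ℝ → α → ℝ := fun p t => if t ∈ N then 0 else f t (max p.1 0) (max p.2 0)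
  have hf' : Measurable (Function.uncurry f') := by
    refine measurable_uncurry_of_continuous_of_measurable (fun t => ?_) fun p =>
      Measurable.ite (measurableSet_toMeasurable _ _) measurable_const (hmeas _ _)
    by_cases htN : t ∈ N
    · simp only [f', htN, if_true]
      exact continuous_const
    · have hc : ContinuousOn (fun p : ℝ × ℝ => f t p.1 p.2) (Ici 0 ×ˢ Ici 0) :=
        not_not.1 fun h => htN (subset_toMeasurable _ _ h)
      simpa only [f', htN, if_false, Function.comp_def] using
        hc.comp_continuous (by fun_prop : Continuous fun p : ℝ × ℝ => (max p.1 0, max p.2 0))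
          fun p => ⟨mem_Ici.2 (le_max_right _ _), mem_Ici.2 (le_max_right _ _)⟩
  have hN : ∀ᵐ t ∂μ, t ∉ N := measure_eq_zero_iff_ae_notMem.1 (by rwa [measure_toMeasurable])
  refine (hf'.comp_aemeasurable ((hu.prodMk hv).prodMk aemeasurable_id)).congr ?_
  filter_upwards [hN, hu0, hv0] with t htN hut hvt
  simp only [Function.comp_apply, Function.uncurry_apply_pair, id_eq, f', htN, if_false,
    max_eq_left hut, max_eq_left hvt]

lemma integrable_uncurry_of_norm_le {α β : Type*} [MeasurableSpace α] [MeasurableSpace β]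
    {μ : Measure α} {ν : Measure β} [IsFiniteMeasure μ] [SFinite ν] {P : α → β → ℝ}
    (hP : AEStronglyMeasurable (Function.uncurry P) (μ.prod ν)) {G : β → ℝ}
    (hG : Integrable G ν) (hle : ∀ᵐ x ∂μ, ∀ᵐ y ∂ν, ‖P x y‖ ≤ G y) :
    Integrable (Function.uncurry P) (μ.prod ν) := by
  refine (integrable_prod_iff hP).2 ⟨?_, ?_⟩
  · filter_upwards [hle, hP.prodMk_left] with x hx hPx
    exact hG.mono' hPx hx
  · refine (integrable_const (∫ y, G y ∂ν)).mono' hP.norm.integral_prod_right' ?_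
    filter_upwards [hle, hP.prodMk_left] with x hx hPx
    rw [Real.norm_of_nonneg (integral_nonneg fun _ => norm_nonneg _)]
    exact integral_mono_ae (hG.mono' hPx hx).norm hG hx

lemma det_pos_of_le {h₀ h₁ h₀' h₁' p₀₀ p₀₁ p₁₀ p₁₁ : ℝ} (hh₀ : h₀ ≤ h₀') (hh₁ : h₁ ≤ h₁')
    (hh₁0 : 0 ≤ h₁) (hh₀'0 : 0 ≤ h₀') (hp₀₀ : 0 ≤ p₀₀) (hp₀₁ : 0 ≤ p₀₁) (hp₁₀ : 0 ≤ p₁₀)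
    (hp₁₁ : 0 ≤ p₁₁) (hd₀ : h₀' * p₀₀ < 1) (hd₁ : h₁' * p₁₁ < 1)
    (hD : 0 < (1 - h₀' * p₀₀) * (1 - h₁' * p₁₁) - h₀' * h₁' * p₀₁ * p₁₀) :
    0 < (1 - h₀ * p₀₀) * (1 - h₁ * p₁₁) - h₀ * h₁ * p₀₁ * p₁₀ := by
  have hdiag : (1 - h₀' * p₀₀) * (1 - h₁' * p₁₁) ≤ (1 - h₀ * p₀₀) * (1 - h₁ * p₁₁) :=
    mul_le_mul (by nlinarith) (by nlinarith) (by linarith) (by nlinarith)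
  have hoff : h₀ * h₁ * (p₀₁ * p₁₀) ≤ h₀' * h₁' * (p₀₁ * p₁₀) :=
    mul_le_mul_of_nonneg_right (mul_le_mul hh₀ hh₁ hh₁0 hh₀'0) (mul_nonneg hp₀₁ hp₁₀)
  nlinarith

lemma cramer_le_of_le {p₀₀ p₀₁ p₁₀ p₁₁ h₀ h₁ x₀ x₁ a₀ a₁ : ℝ}
    (hx₀ : p₀₀ * (h₀ * x₀) + p₀₁ * (h₁ * x₁) + a₀ ≤ x₀)
    (hx₁ : p₁₀ * (h₀ * x₀) + p₁₁ * (h₁ * x₁) + a₁ ≤ x₁)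
    (hp₀₁ : 0 ≤ p₀₁) (hp₁₀ : 0 ≤ p₁₀) (hh₀ : 0 ≤ h₀) (hh₁ : 0 ≤ h₁)
    (hd₀ : h₀ * p₀₀ < 1) (hd₁ : h₁ * p₁₁ < 1) :
    (1 - h₁ * p₁₁) * a₀ + h₁ * p₀₁ * a₁
        ≤ ((1 - h₀ * p₀₀) * (1 - h₁ * p₁₁) - h₀ * h₁ * p₀₁ * p₁₀) * x₀ ∧
      h₀ * p₁₀ * a₀ + (1 - h₀ * p₀₀) * a₁
        ≤ ((1 - h₀ * p₀₀) * (1 - h₁ * p₁₁) - h₀ * h₁ * p₀₁ * p₁₀) * x₁ :=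
  ⟨by nlinarith [mul_le_mul_of_nonneg_left hx₀ (sub_nonneg.2 hd₁.le),
      mul_le_mul_of_nonneg_left hx₁ (mul_nonneg hh₁ hp₀₁)],
    by nlinarith [mul_le_mul_of_nonneg_left hx₁ (sub_nonneg.2 hd₀.le),
      mul_le_mul_of_nonneg_left hx₀ (mul_nonneg hh₀ hp₁₀)]⟩

lemma div_mul_le_mul_of_le_mul {K D T X : ℝ} (hK : 0 ≤ K) (hD : 0 < D) (h : T ≤ D * X) :
    K / D * T ≤ K * X := by
  rw [div_mul_eq_mul_div, div_le_iff₀ hD, mul_assoc, mul_comm X]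
  exact mul_le_mul_of_nonneg_left h hK

namespace Setup

variable (S : Setup) {i j : Fin 2}

instance isFiniteMeasure_B (i j : Fin 2) : IsFiniteMeasure (S.B i j) := S.B_fin i j

lemma ae_mem_Icc_B (i j : Fin 2) : ∀ᵐ t ∂S.B i j, t ∈ Icc (0:ℝ) 1 := ae_iff.2 (S.B_supp i j)

lemma integrable_B {w : ℝ → ℝ} (hw : ContinuousOn w (Icc (0:ℝ) 1)) :
    Integrable w (S.B i j) := by
  rw [← Measure.restrict_eq_self_of_ae_mem (S.ae_mem_Icc_B i j)]
  exact hw.integrableOn_Icc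

lemma β_nonneg {w : ℝ → ℝ} (hw : ∀ t ∈ Icc (0:ℝ) 1, 0 ≤ w t) : 0 ≤ S.β i j w :=
  integral_nonneg_of_ae ((S.ae_mem_Icc_B i j).mono hw)

lemma δ_nonneg {w : ℝ → ℝ} (hw : ∀ t ∈ Icc (0:ℝ) 1, 0 ≤ w t) : 0 ≤ S.δ i j w :=
  integral_nonneg_of_ae ((ae_iff.2 (S.C_supp i j)).mono hw)

lemma cc_pos : 0 < S.cc := by
  simp only [cc, ctilde, lt_min_iff]
  exact ⟨⟨(S.c_mem 0).1, (S.cγ_mem 0 0).1, (S.cγ_mem 0 1).1⟩,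
    ⟨(S.c_mem 1).1, (S.cγ_mem 1 0).1, (S.cγ_mem 1 1).1⟩⟩

lemma cc_le_ctilde (i : Fin 2) : S.cc ≤ S.ctilde i := by
  fin_cases i
  exacts [min_le_left _ _, min_le_right _ _]

lemma h1_le_h2 (i j : Fin 2) : S.h1 i j ≤ S.h2 i j := by
  simpa using (S.H_bound_lower i j 1 zero_le_one).trans (S.H_bound_upper i j 1 zero_le_one)

lemma β_γ_nonneg (i j l : Fin 2) : 0 ≤ S.β i j (S.γ i l) := S.β_nonneg (S.γ_nonneg i l)

lemma h1_mul_β_γ_lt_one (i j : Fin 2) : S.h1 i j * S.β i j (S.γ i j) < 1 :=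
  (mul_le_mul_of_nonneg_right (S.h1_le_h2 i j) (S.β_γ_nonneg i j j)).trans_lt (S.hβγ i j)

lemma Dl_pos (i : Fin 2) : 0 < S.Dl i :=
  det_pos_of_le (S.h1_le_h2 i 0) (S.h1_le_h2 i 1) (S.h1_nonneg i 1) (S.h2_nonneg i 0)
    (S.β_γ_nonneg i 0 0) (S.β_γ_nonneg i 0 1) (S.β_γ_nonneg i 1 0) (S.β_γ_nonneg i 1 1)
    (S.hβγ i 0) (S.hβγ i 1) (S.D_pos i)

lemma Icc_ab_subset (i : Fin 2) : Icc (S.a i) (S.b i) ⊆ Icc (0:ℝ) 1 :=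
  Icc_subset_Icc (S.ab_mem i).1 (S.ab_mem i).2.2

lemma zero_mem_lowerBounds_fInfStar (i : Fin 2) {ρ : ℝ} (hρ : 0 ≤ ρ) :
    0 ∈ lowerBounds {x | ∃ t ∈ Icc (S.a i) (S.b i), ∃ u ∈ Icc (0:ℝ) (ρ / S.cc),
      ∃ v ∈ Icc (0:ℝ) (ρ / S.cc), x = S.f i t u v / ρ} := by
  rintro _ ⟨t, ht, u, hu, v, hv, rfl⟩
  exact div_nonneg (S.f_nonneg i t (S.Icc_ab_subset i ht) u hu.1 v hv.1) hρ

lemma fInfStar_nonneg (i : Fin 2) {ρ : ℝ} (hρ : 0 < ρ) : 0 ≤ S.fInfStar i ρ := by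
  have hr : (0:ℝ) ∈ Icc 0 (ρ / S.cc) := ⟨le_rfl, (div_pos hρ S.cc_pos).le⟩
  exact le_csInf ⟨_, S.a i, ⟨le_rfl, (S.ab_mem i).2.1⟩, 0, hr, 0, hr, rfl⟩
    (S.zero_mem_lowerBounds_fInfStar i hρ.le)

lemma mul_fInfStar_le {ρ : ℝ} (hρ : 0 < ρ) {s x y : ℝ} (hs : s ∈ Icc (S.a i) (S.b i))
    (hx : x ∈ Icc (0:ℝ) (ρ / S.cc)) (hy : y ∈ Icc (0:ℝ) (ρ / S.cc)) :
    ρ * S.fInfStar i ρ ≤ S.f i s x y := by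
  have h := csInf_le ⟨0, S.zero_mem_lowerBounds_fInfStar i hρ.le⟩ ⟨s, hs, x, hx, y, hy, rfl⟩
  rw [← le_div_iff₀' hρ]
  exact h


/-- Its infimum over `[aᵢ,bᵢ]` is `1/Mᵢ`. -/
def kgIntegral (i : Fin 2) (t : ℝ) : ℝ := ∫ s in Icc (S.a i) (S.b i), S.k i t s * S.g i s

def KKIntegral (i j : Fin 2) : ℝ := ∫ s in Icc (S.a i) (S.b i), S.KK i j s * S.g i s

lemma measurable_kg (i : Fin 2) (t : ℝ) : Measurable fun s => S.k i t s * S.g i s :=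
  ((S.k_meas i).comp measurable_prodMk_left).mul (S.g_meas i)

lemma ae_kg_nonneg {t : ℝ} (ht : t ∈ Icc (0:ℝ) 1) :
    ∀ᵐ s ∂(volume.restrict (Icc (0:ℝ) 1)), 0 ≤ S.k i t s * S.g i s := by
  filter_upwards [S.g_nonneg i, ae_restrict_mem measurableSet_Icc] with s hg hs
  exact mul_nonneg (S.k_nonneg i t ht s hs) hg

lemma ae_norm_kg_le {t : ℝ} (ht : t ∈ Icc (0:ℝ) 1) :
    ∀ᵐ s ∂(volume.restrict (Icc (0:ℝ) 1)), ‖S.k i t s * S.g i s‖ ≤ S.g i s * S.Φ i s := by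
  filter_upwards [S.ae_kg_nonneg ht, S.k_le i t ht, S.g_nonneg i] with s hkg hk hg
  rw [Real.norm_of_nonneg hkg, mul_comm (S.g i s)]
  exact mul_le_mul_of_nonneg_right hk hg

lemma integrableOn_kg {t : ℝ} (ht : t ∈ Icc (0:ℝ) 1) :
    IntegrableOn (fun s => S.k i t s * S.g i s) (Icc (0:ℝ) 1) :=
  (S.gΦ_int i).mono' (S.measurable_kg i t).aestronglyMeasurable (S.ae_norm_kg_le ht)

lemma kgIntegral_nonneg {t : ℝ} (ht : t ∈ Icc (0:ℝ) 1) : 0 ≤ S.kgIntegral i t :=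
  integral_nonneg_of_ae (ae_restrict_of_ae_restrict_of_subset (S.Icc_ab_subset i)
    (S.ae_kg_nonneg ht))

lemma MInv_le_kgIntegral {t : ℝ} (ht : t ∈ Icc (S.a i) (S.b i)) : S.MInv i ≤ S.kgIntegral i t :=
  csInf_le ⟨0, fun _ ⟨_, hτ, hx⟩ => hx ▸ S.kgIntegral_nonneg (S.Icc_ab_subset i hτ)⟩ ⟨t, ht, rfl⟩

lemma integrable_kg_prod (i j : Fin 2) :
    Integrable (Function.uncurry fun t s => S.k i t s * S.g i s)
      ((S.B i j).prod (volume.restrict (Icc (S.a i) (S.b i)))) := by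
  refine integrable_uncurry_of_norm_le
    ((S.k_meas i).mul ((S.g_meas i).comp measurable_snd)).aestronglyMeasurable
    ((S.gΦ_int i).mono_set (S.Icc_ab_subset i)) ?_
  filter_upwards [S.ae_mem_Icc_B i j] with t ht
  exact ae_restrict_of_ae_restrict_of_subset (S.Icc_ab_subset i) (S.ae_norm_kg_le ht)

lemma integral_kgIntegral_B (i j : Fin 2) : ∫ t, S.kgIntegral i t ∂S.B i j = S.KKIntegral i j := by
  simp only [kgIntegral, KKIntegral, KK, integral_integral_swap (S.integrable_kg_prod i j),
    integral_mul_const]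

lemma integrableOn_kgf {ρ : ℝ} (hρ : 0 < ρ) {u v : ℝ → ℝ} (hu : ContinuousOn u (Icc 0 1))
    (hu' : MapsTo u (Icc 0 1) (Icc 0 (ρ / S.cc))) (hv : ContinuousOn v (Icc 0 1))
    (hv' : MapsTo v (Icc 0 1) (Icc 0 (ρ / S.cc))) {t : ℝ} (ht : t ∈ Icc (0:ℝ) 1) :
    IntegrableOn (fun s => S.k i t s * S.g i s * S.f i s (u s) (v s)) (Icc (0:ℝ) 1) := by
  obtain ⟨φ, hφ, hfφ⟩ := S.f_bdd i (ρ / S.cc) (div_pos hρ S.cc_pos)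
  obtain ⟨C, hC⟩ := hφ.exists_ae_le_of_top
  have hf : AEMeasurable (fun s => S.f i s (u s) (v s)) (volume.restrict (Icc (0:ℝ) 1)) :=
    aemeasurable_of_caratheodory (S.f_meas i) (S.f_cont i)
      (hu.aemeasurable measurableSet_Icc) (hv.aemeasurable measurableSet_Icc)
      (ae_restrict_of_forall_mem measurableSet_Icc fun s hs => (hu' hs).1)
      (ae_restrict_of_forall_mem measurableSet_Icc fun s hs => (hv' hs).1)
  refine ((S.gΦ_int i).const_mul C).mono'
    ((S.measurable_kg i t).aemeasurable.mul hf).aestronglyMeasurable ?_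
  filter_upwards [S.ae_norm_kg_le ht, hfφ, hC, ae_restrict_mem measurableSet_Icc]
    with s hkg hfφ hC hs
  have hf0 := S.f_nonneg i s hs _ (hu' hs).1 _ (hv' hs).1
  rw [norm_mul, Real.norm_of_nonneg hf0, mul_comm C]
  exact mul_le_mul hkg ((hfφ _ (hu' hs) _ (hv' hs)).trans hC) hf0 ((norm_nonneg _).trans hkg)

lemma mul_kgIntegral_le_F {ρ : ℝ} (hρ : 0 < ρ) {u v : ℝ → ℝ} (hu : ContinuousOn u (Icc 0 1))
    (hu' : MapsTo u (Icc 0 1) (Icc 0 (ρ / S.cc))) (hv : ContinuousOn v (Icc 0 1))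
    (hv' : MapsTo v (Icc 0 1) (Icc 0 (ρ / S.cc))) {t : ℝ} (ht : t ∈ Icc (0:ℝ) 1) :
    ρ * S.fInfStar i ρ * S.kgIntegral i t ≤ S.F i u v t := by
  have hkgf := S.integrableOn_kgf (i := i) hρ hu hu' hv hv' ht
  have hkg_ab :=
    ae_restrict_of_ae_restrict_of_subset (S.Icc_ab_subset i) (S.ae_kg_nonneg (i := i) ht)
  calc ρ * S.fInfStar i ρ * S.kgIntegral i t
      = ∫ s in Icc (S.a i) (S.b i), ρ * S.fInfStar i ρ * (S.k i t s * S.g i s) :=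
        (integral_const_mul _ _).symm
    _ ≤ ∫ s in Icc (S.a i) (S.b i), S.k i t s * S.g i s * S.f i s (u s) (v s) := by
        refine integral_mono_ae
          (((S.integrableOn_kg ht).mono_set (S.Icc_ab_subset i)).const_mul _)
          (hkgf.mono_set (S.Icc_ab_subset i)) ?_
        filter_upwards [hkg_ab, ae_restrict_mem measurableSet_Icc] with s hkg hs
        have hs' := S.Icc_ab_subset i hs
        rw [mul_comm _ (S.k i t s * S.g i s)]
        exact mul_le_mul_of_nonneg_left (S.mul_fInfStar_le hρ hs (hu' hs') (hv' hs')) hkg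
    _ ≤ S.F i u v t := by
        refine setIntegral_mono_set hkgf ?_ (S.Icc_ab_subset i).eventuallyLE
        filter_upwards [S.ae_kg_nonneg ht, ae_restrict_mem measurableSet_Icc] with s hkg hs
        exact mul_nonneg hkg (S.f_nonneg i s hs _ (hu' hs).1 _ (hv' hs).1)

lemma β_combination_le {w : ℝ → ℝ} (hw : ContinuousOn w (Icc (0:ℝ) 1)) {x₀ x₁ c : ℝ}
    (h : ∀ t ∈ Icc (0:ℝ) 1, S.γ i 0 t * x₀ + S.γ i 1 t * x₁ + c * S.kgIntegral i t ≤ w t)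
    (j : Fin 2) :
    S.β i j (S.γ i 0) * x₀ + S.β i j (S.γ i 1) * x₁
        + c * S.KKIntegral i j ≤ S.β i j w := by
  have hγ₀ := (S.integrable_B (i := i) (j := j) (S.γ_cont i 0)).mul_const x₀
  have hγ₁ := (S.integrable_B (i := i) (j := j) (S.γ_cont i 1)).mul_const x₁
  have hγ : Integrable (fun t => S.γ i 0 t * x₀ + S.γ i 1 t * x₁) (S.B i j) := hγ₀.add hγ₁
  have hJ : Integrable (fun t => c * S.kgIntegral i t) (S.B i j) :=
    (S.integrable_kg_prod i j).integral_prod_left.const_mul c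
  rw [← S.integral_kgIntegral_B, β, β, β, ← integral_mul_const, ← integral_mul_const,
    ← integral_const_mul, ← integral_add hγ₀ hγ₁, ← integral_add hγ hJ]
  exact integral_mono_ae (hγ.add hJ) (S.integrable_B hw) ((S.ae_mem_Icc_B i j).mono h)

lemma mul_Ψ_le {A X₀ X₁ : ℝ}
    (hX₀ : (1 - S.h1 i 1 * S.β i 1 (S.γ i 1)) * (A * S.KKIntegral i 0)
        + S.h1 i 1 * S.β i 0 (S.γ i 1) * (A * S.KKIntegral i 1) ≤ S.Dl i * X₀)
    (hX₁ : S.h1 i 0 * S.β i 1 (S.γ i 0) * (A * S.KKIntegral i 0)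
        + (1 - S.h1 i 0 * S.β i 0 (S.γ i 0)) * (A * S.KKIntegral i 1) ≤ S.Dl i * X₁) :
    A * S.Ψ i ≤ S.cγ i 0 * supN (S.γ i 0) * S.h1 i 0 * X₀
      + S.cγ i 1 * supN (S.γ i 1) * S.h1 i 1 * X₁ + A * S.MInv i := by
  have hK : ∀ l, 0 ≤ S.cγ i l * supN (S.γ i l) * S.h1 i l := fun l =>
    mul_nonneg (mul_nonneg (S.cγ_mem i l).1.le (supN_nonneg _)) (S.h1_nonneg i l)
  have h₀ := div_mul_le_mul_of_le_mul (hK 0) (S.Dl_pos i) hX₀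
  have h₁ := div_mul_le_mul_of_le_mul (hK 1) (S.Dl_pos i) hX₁
  rw [Ψ, ← KKIntegral, ← KKIntegral]
  linear_combination h₀ + h₁

theorem lt_minOnIcc_of_supersolution {ρ : ℝ} (hρ : 0 < ρ) (hI : 1 < S.fInfStar i ρ * S.Ψ i)
    {u v : ℝ → ℝ} (hu : ContinuousOn u (Icc 0 1)) (hu' : MapsTo u (Icc 0 1) (Icc 0 (ρ / S.cc)))
    (hv : ContinuousOn v (Icc 0 1)) (hv' : MapsTo v (Icc 0 1) (Icc 0 (ρ / S.cc)))
    {w : ℝ → ℝ} (hw : ContinuousOn w (Icc 0 1)) (hw0 : ∀ t ∈ Icc (0:ℝ) 1, 0 ≤ w t)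
    (hsuper : ∀ t ∈ Icc (0:ℝ) 1,
      S.γ i 0 t * S.H i 0 (S.β i 0 w) + S.γ i 1 t * S.H i 1 (S.β i 1 w) + S.F i u v t ≤ w t) :
    ρ < minOnIcc w (S.a i) (S.b i) := by
  set A := ρ * S.fInfStar i ρ
  have hA : 0 ≤ A := mul_nonneg hρ.le (S.fInfStar_nonneg i hρ)
  have hX : ∀ l, 0 ≤ S.h1 i l * S.β i l w := fun l =>
    mul_nonneg (S.h1_nonneg i l) (S.β_nonneg hw0)
  have hlow : ∀ t ∈ Icc (0:ℝ) 1, S.γ i 0 t * (S.h1 i 0 * S.β i 0 w)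
      + S.γ i 1 t * (S.h1 i 1 * S.β i 1 w) + A * S.kgIntegral i t ≤ w t := by
    intro t ht
    have hH : ∀ l, S.γ i l t * (S.h1 i l * S.β i l w) ≤ S.γ i l t * S.H i l (S.β i l w) :=
      fun l => mul_le_mul_of_nonneg_left (S.H_bound_lower i l _ (S.β_nonneg hw0))
        (S.γ_nonneg i l t ht)
    linarith [hH 0, hH 1, S.mul_kgIntegral_le_F (i := i) hρ hu hu' hv hv' ht, hsuper t ht]
  obtain ⟨hX₀, hX₁⟩ := cramer_le_of_le (S.β_combination_le hw hlow 0)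
    (S.β_combination_le hw hlow 1) (S.β_γ_nonneg i 0 1) (S.β_γ_nonneg i 1 0) (S.h1_nonneg i 0)
    (S.h1_nonneg i 1) (S.h1_mul_β_γ_lt_one i 0) (S.h1_mul_β_γ_lt_one i 1)
  have hab : ∀ t ∈ Icc (S.a i) (S.b i), S.cγ i 0 * supN (S.γ i 0) * S.h1 i 0 * S.β i 0 w
      + S.cγ i 1 * supN (S.γ i 1) * S.h1 i 1 * S.β i 1 w + A * S.MInv i ≤ w t := by
    intro t ht
    have hγ : ∀ l, S.cγ i l * supN (S.γ i l) * (S.h1 i l * S.β i l w)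
        ≤ S.γ i l t * (S.h1 i l * S.β i l w) := fun l =>
      mul_le_mul_of_nonneg_right (S.γ_ge i l t ht) (hX l)
    linarith [hγ 0, hγ 1, hlow t (S.Icc_ab_subset i ht),
      mul_le_mul_of_nonneg_left (S.MInv_le_kgIntegral ht) hA]
  calc ρ < A * S.Ψ i := by rw [mul_assoc]; exact lt_mul_of_one_lt_right hρ hI
    _ ≤ _ := S.mul_Ψ_le hX₀ hX₁
    _ ≤ minOnIcc w (S.a i) (S.b i) :=
      le_csInf ((nonempty_Icc.2 (S.ab_mem i).2.1).image w) (forall_mem_image.2 hab)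

end Setup

theorem no_translate_fixed_point_on_boundary_Vrho_star_general (S : Setup) (ρ : ℝ) (hρ : 0 < ρ)
    (hI0star : S.CondI0Star ρ) (u v : ℝ → ℝ) (huv : S.inK u v)
    (hu_le : minOnIcc u (S.a 0) (S.b 0) ≤ ρ) (hv_le : minOnIcc v (S.a 1) (S.b 1) ≤ ρ)
    (μ : ℝ) (hμ : 0 ≤ μ) :
    ¬ ∀ t ∈ Icc (0:ℝ) 1, u t = S.T1 u v t + μ ∧ v t = S.T2 u v t + μ := by
  intro hsol
  obtain ⟨hu, hv, hu0, hv0, hKu, hKv⟩ := huv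
  have hu' : MapsTo u (Icc 0 1) (Icc 0 (ρ / S.cc)) := fun t ht =>
    ⟨hu0 t ht, le_div_of_mul_supN_le hu S.cc_pos (S.cc_le_ctilde 0) (hKu.trans hu_le) ht⟩
  have hv' : MapsTo v (Icc 0 1) (Icc 0 (ρ / S.cc)) := fun t ht =>
    ⟨hv0 t ht, le_div_of_mul_supN_le hv S.cc_pos (S.cc_le_ctilde 1) (hKv.trans hv_le) ht⟩
  have hL : ∀ i j {w : ℝ → ℝ}, (∀ t ∈ Icc (0:ℝ) 1, 0 ≤ w t) → ∀ t ∈ Icc (0:ℝ) 1,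
      0 ≤ S.γ i j t * S.L i j (S.δ i j w) := fun i j _ hw t ht =>
    mul_nonneg (S.γ_nonneg i j t ht) (S.L_nonneg i j _ (S.δ_nonneg hw))
  rcases Fin.exists_fin_two.1 hI0star with hi | hi
  · refine (S.lt_minOnIcc_of_supersolution hρ hi hu hu' hv hv' hu hu0 fun t ht => ?_).not_ge hu_le
    have hut := (hsol t ht).1
    rw [Setup.T1] at hut
    linarith [hL 0 0 hv0 t ht, hL 0 1 hv0 t ht]
  · refine (S.lt_minOnIcc_of_supersolution hρ hi hu hu' hv hv' hv hv0 fun t ht => ?_).not_ge hv_le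
    have hvt := (hsol t ht).2
    rw [Setup.T2] at hvt
    linarith [hL 1 0 hu0 t ht, hL 1 1 hu0 t ht]

/-- Under condition `(I⁰_ρ)*`, for every `(u,v)` in the boundary of `V_ρ` relative to `K`
and every `μ ≥ 0`, one has `(u,v) ≠ T(u,v) + μ(e,e)` where `e ≡ 1`. -/
theorem no_translate_fixed_point_on_boundary_Vrho_star (S : Setup) (ρ : ℝ) (hρ : 0 < ρ)
    (hI0star : S.CondI0Star ρ) (u v : ℝ → ℝ) (huv : S.inK u v)
    (hu_le : minOnIcc u (S.a 0) (S.b 0) ≤ ρ) (hv_le : minOnIcc v (S.a 1) (S.b 1) ≤ ρ)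
    (hbd : minOnIcc u (S.a 0) (S.b 0) = ρ ∨ minOnIcc v (S.a 1) (S.b 1) = ρ)
    (μ : ℝ) (hμ : 0 ≤ μ) :
    ¬ ∀ t ∈ Icc (0:ℝ) 1, u t = S.T1 u v t + μ ∧ v t = S.T2 u v t + μ :=
  no_translate_fixed_point_on_boundary_Vrho_star_general S ρ hρ hI0star u v huv hu_le hv_le μ hμ
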